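/- Let Ω ⊆ ℂ be open, let κ > 0 be a real constant, and let A_z, A_z̄, Ψ : Ω → Matrix N N ℂ be smooth with A_z̄ = −A_zᴴ. Suppose on Ω: (i) ∂_z̄ Ψ + [A_z̄, Ψ] = 0, and (ii) ∂_z A_z̄ − ∂_z̄ A_z + [A_z, A_z̄] = −(2/κ)[Ψᴴ, Ψ] (the self-dual Chern–Simons equations). Then the connection Ã defined by Ã_z := A_z − √(2/κ) Ψ, Ã_z̄ := A_z̄ + √(2/κ) Ψᴴ is flat: ∂_z Ã_z̄ − ∂_z̄ Ã_z + [Ã_z, Ã_z̄] = 0 on Ω. -/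

import Mathlib

open Complex Matrix

noncomputable section

/-- Wirtinger derivative `∂_z` of a ℂ-valued function of one complex variable,
viewed as a function of two real variables:  `∂_z F = ½(∂_x F − i ∂_y F)`. -/
def wdz (f : ℂ → ℂ) (z : ℂ) : ℂ :=
  (1 / 2 : ℂ) * (fderiv ℝ f z 1 - Complex.I * fderiv ℝ f z Complex.I)

/-- Wirtinger derivative `∂_z̄ F = ½(∂_x F + i ∂_y F)`. -/
def wdzbar (f : ℂ → ℂ) (z : ℂ) : ℂ :=
  (1 / 2 : ℂ) * (fderiv ℝ f z 1 + Complex.I * fderiv ℝ f z Complex.I)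

/-- Entrywise Wirtinger derivative `∂_z` for matrix-valued functions. -/
def mdz {n m : Type*} (F : ℂ → Matrix n m ℂ) (z : ℂ) : Matrix n m ℂ :=
  Matrix.of fun i j => wdz (fun w => F w i j) z

/-- Entrywise Wirtinger derivative `∂_z̄` for matrix-valued functions. -/
def mdzbar {n m : Type*} (F : ℂ → Matrix n m ℂ) (z : ℂ) : Matrix n m ℂ :=
  Matrix.of fun i j => wdzbar (fun w => F w i j) z

/-- A matrix-valued function is smooth on a set if each entry is `C^∞`
as a function of the two real variables. -/
def MSmoothOn {n m : Type*} (F : ℂ → Matrix n m ℂ) (Ω : Set ℂ) : Prop :=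
  ∀ i j, ContDiffOn ℝ (⊤ : ℕ∞) (fun z => F z i j) Ω

lemma wdz_add {f g : ℂ → ℂ} {z : ℂ} (hf : DifferentiableAt ℝ f z)
    (hg : DifferentiableAt ℝ g z) :
    wdz (fun w => f w + g w) z = wdz f z + wdz g z := by
  simp only [wdz, fderiv_fun_add hf hg, ContinuousLinearMap.add_apply]; ring
lemma wdzbar_sub {f g : ℂ → ℂ} {z : ℂ} (hf : DifferentiableAt ℝ f z)
    (hg : DifferentiableAt ℝ g z) :
    wdzbar (fun w => f w - g w) z = wdzbar f z - wdzbar g z := by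
  simp only [wdzbar, fderiv_fun_sub hf hg, ContinuousLinearMap.sub_apply]; ring
lemma wdz_const_mul {f : ℂ → ℂ} {z : ℂ} (c : ℂ) (hf : DifferentiableAt ℝ f z) :
    wdz (fun w => c * f w) z = c * wdz f z := by
  simp only [wdz, fderiv_const_mul hf c, ContinuousLinearMap.smul_apply, smul_eq_mul]; ring
lemma wdzbar_const_mul {f : ℂ → ℂ} {z : ℂ} (c : ℂ) (hf : DifferentiableAt ℝ f z) :
    wdzbar (fun w => c * f w) z = c * wdzbar f z := by
  simp only [wdzbar, fderiv_const_mul hf c, ContinuousLinearMap.smul_apply, smul_eq_mul]; ring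
lemma wdz_conj {f : ℂ → ℂ} {z : ℂ} (hf : DifferentiableAt ℝ f z) :
    wdz (fun w => (starRingEnd ℂ) (f w)) z = (starRingEnd ℂ) (wdzbar f z) := by
  have h : fderiv ℝ (fun w => (starRingEnd ℂ) (f w)) z
      = (Complex.conjCLE : ℂ →L[ℝ] ℂ).comp (fderiv ℝ f z) :=
    ((Complex.conjCLE : ℂ →L[ℝ] ℂ).hasFDerivAt.comp z hf.hasFDerivAt).fderiv
  simp only [wdz, wdzbar, h, ContinuousLinearMap.comp_apply,
    ContinuousLinearEquiv.coe_coe, Complex.conjCLE_apply,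
    Complex.conj_conj, Complex.conj_I, map_div₀, _root_.map_one, _root_.map_ofNat, _root_.map_mul, _root_.map_add]
  ring

lemma conj_diff {f : ℂ → ℂ} {z : ℂ} (hf : DifferentiableAt ℝ f z) :
    DifferentiableAt ℝ (fun w => (starRingEnd ℂ) (f w)) z :=
  (Complex.conjCLE : ℂ →L[ℝ] ℂ).differentiableAt.comp z hf

lemma mdz_step {n : Type*} (A P : ℂ → Matrix n n ℂ) (c : ℂ) (z : ℂ)
    (hA : ∀ i j, DifferentiableAt ℝ (fun w => A w i j) z)
    (hP : ∀ i j, DifferentiableAt ℝ (fun w => P w i j) z) :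
    mdz (fun w => A w + c • (P w)ᴴ) z = mdz A z + c • (mdzbar P z)ᴴ := by
  ext i j
  have h1 : (fun w => (A w + c • (P w)ᴴ) i j)
      = fun w => A w i j + c * (starRingEnd ℂ) (P w j i) := by
    funext w; simp [Matrix.conjTranspose_apply]
  simp only [mdz, Matrix.of_apply, h1, Matrix.add_apply, Matrix.smul_apply,
    Matrix.conjTranspose_apply, mdzbar, smul_eq_mul, Complex.star_def]
  rw [wdz_add (hA i j) (((conj_diff (hP j i))).const_mul c),
    wdz_const_mul c (conj_diff (hP j i)), wdz_conj (hP j i)]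

lemma mdzbar_step {n : Type*} (A P : ℂ → Matrix n n ℂ) (c : ℂ) (z : ℂ)
    (hA : ∀ i j, DifferentiableAt ℝ (fun w => A w i j) z)
    (hP : ∀ i j, DifferentiableAt ℝ (fun w => P w i j) z) :
    mdzbar (fun w => A w - c • P w) z = mdzbar A z - c • mdzbar P z := by
  ext i j
  have h1 : (fun w => (A w - c • P w) i j)
      = fun w => A w i j - c * P w i j := by
    funext w; simp
  simp only [mdzbar, Matrix.of_apply, h1, Matrix.sub_apply, Matrix.smul_apply, smul_eq_mul]
  rw [wdzbar_sub (hA i j) ((hP i j).const_mul c), wdzbar_const_mul c (hP i j)]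


set_option maxHeartbeats 1000000 in
/-- if the self-dual Chern–Simons equations
`∂_z̄Ψ + [A_z̄, Ψ] = 0` and `∂_zA_z̄ − ∂_z̄A_z + [A_z, A_z̄] = −(2/κ)[Ψᴴ, Ψ]`
hold on `Ω` for an anti-Hermitian connection (`A_z̄ = −A_zᴴ`), then the connection
`Ã_z := A_z − √(2/κ)Ψ`, `Ã_z̄ := A_z̄ + √(2/κ)Ψᴴ` is flat on `Ω`. -/
theorem stmt7 {N : Type*} [Fintype N] [DecidableEq N]
    (Ω : Set ℂ) (hΩ : IsOpen Ω) (κ : ℝ) (hκ : 0 < κ)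
    (Az Azb Ψ : ℂ → Matrix N N ℂ)
    (hsmAz : MSmoothOn Az Ω) (hsmAzb : MSmoothOn Azb Ω) (hsmΨ : MSmoothOn Ψ Ω)
    (hanti : ∀ z ∈ Ω, Azb z = -(Az z)ᴴ)
    (h1 : ∀ z ∈ Ω, mdzbar Ψ z + (Azb z * Ψ z - Ψ z * Azb z) = 0)
    (h2 : ∀ z ∈ Ω,
        mdz Azb z - mdzbar Az z + (Az z * Azb z - Azb z * Az z)
          = (-(2 / κ : ℝ) : ℂ) • ((Ψ z)ᴴ * Ψ z - Ψ z * (Ψ z)ᴴ)) :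
    ∀ z ∈ Ω,
      mdz (fun w => Azb w + ((Real.sqrt (2 / κ) : ℝ) : ℂ) • (Ψ w)ᴴ) z
        - mdzbar (fun w => Az w - ((Real.sqrt (2 / κ) : ℝ) : ℂ) • Ψ w) z
        + ((Az z - ((Real.sqrt (2 / κ) : ℝ) : ℂ) • Ψ z)
              * (Azb z + ((Real.sqrt (2 / κ) : ℝ) : ℂ) • (Ψ z)ᴴ)
            - (Azb z + ((Real.sqrt (2 / κ) : ℝ) : ℂ) • (Ψ z)ᴴ)
              * (Az z - ((Real.sqrt (2 / κ) : ℝ) : ℂ) • Ψ z)) = 0 := by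
  intro z hz
  set c : ℂ := ((Real.sqrt (2 / κ) : ℝ) : ℂ) with hc
  set k : ℂ := ((2 / κ : ℝ) : ℂ) with hk
  have hc2 : c * c = k := by
    rw [hc, hk, ← Complex.ofReal_mul,
      Real.mul_self_sqrt (div_nonneg (by norm_num) hκ.le)]
  have dAz : ∀ i j, DifferentiableAt ℝ (fun w => Az w i j) z := fun i j =>
    ((hsmAz i j).contDiffAt (hΩ.mem_nhds hz)).differentiableAt (by simp)
  have dAzb : ∀ i j, DifferentiableAt ℝ (fun w => Azb w i j) z := fun i j =>
    ((hsmAzb i j).contDiffAt (hΩ.mem_nhds hz)).differentiableAt (by simp)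
  have dΨ : ∀ i j, DifferentiableAt ℝ (fun w => Ψ w i j) z := fun i j =>
    ((hsmΨ i j).contDiffAt (hΩ.mem_nhds hz)).differentiableAt (by simp)
  rw [mdz_step Azb Ψ c z dAzb dΨ, mdzbar_step Az Ψ c z dAz dΨ]
  set a := Az z
  set b := Azb z
  set p := Ψ z
  have hbH : bᴴ = -a := by
    rw [show b = -aᴴ from hanti z hz, Matrix.conjTranspose_neg,
      Matrix.conjTranspose_conjTranspose]
  have h1z : mdzbar Ψ z = -(b * p - p * b) := by
    have := h1 z hz; linear_combination (norm := abel) this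
  have h1zH : (mdzbar Ψ z)ᴴ = pᴴ * a - a * pᴴ := by
    rw [h1z]
    simp only [Matrix.conjTranspose_neg, Matrix.conjTranspose_sub,
      Matrix.conjTranspose_mul, hbH]
    simp only [Matrix.neg_mul, Matrix.mul_neg]
    abel
  have h2z : mdz Azb z = mdzbar Az z - (a * b - b * a) + (-k) • (pᴴ * p - p * pᴴ) := by
    have := h2 z hz
    linear_combination (norm := abel) this
  rw [h2z, h1zH, h1z]
  simp only [Matrix.mul_add, Matrix.add_mul, Matrix.mul_sub, Matrix.sub_mul,
    Matrix.smul_mul, Matrix.mul_smul, smul_smul, hc2, smul_sub, smul_add, smul_neg,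
    neg_smul, Matrix.neg_mul, Matrix.mul_neg]
  abel
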